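/- Abstract minimax transfer theorem: Let Ω be a parameter space with a family of risk functions R(θ, δ) ∈ [0, ∞) invariant under a group as in the risk-invariance identity, and suppose the minimax value over Ω is R < ∞ and is approached by Bayes risks r_n of finitely supported priors π_n with supports S_n ⊆ Ω. Let Ω* ⊆ Ω and suppose there are group elements ḡ_n and sets B_n ⊆ Ω* with ḡ_n B_n ⊆ ḡ_{n+1} B_{n+1} and ⋃_n ḡ_n B_n = Ω. If δ₀ has constant risk equal to R on Ω (so δ₀ is minimax on Ω), then sup_{θ ∈ Ω*} R(θ, δ₀) = R equals the minimax value of the restricted problem on Ω*, and hence δ₀ is minimax on Ω*. -/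
import Mathlib


open scoped ENNReal
open Filter

/-- Abstract version of Theorem 2 (minimax transfer to a restricted parameter
space): if the minimax value `Rv < ∞` over `Ω` is approached by Bayes risks of
finitely supported priors, the risk is group-invariant, subsets
`Bₙ ⊆ Ω*` satisfy `ḡₙBₙ ⊆ ḡₙ₊₁Bₙ₊₁` and `⋃ₙ ḡₙBₙ = Ω`, and `δ₀` has constant
risk `Rv`, then `δ₀` is minimax on `Ω*` and the restricted minimax value is
also `Rv`. -/
theorem stmt11 {Ω X A G : Type*} [Group G]
    (barG : G → Ω ≃ Ω) (gX : G → X → X) (gA : G → A → A)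
    (R : Ω → (X → A) → ℝ≥0∞)
    (hinv : ∀ (g : G) (θ : Ω) (δ : X → A),
      R θ δ = R (barG g θ) (fun x => gA g (δ (gX g⁻¹ x))))
    (Rv : ℝ≥0∞) (hRv : Rv ≠ ⊤)
    (hminimax : (⨅ δ : X → A, ⨆ θ : Ω, R θ δ) = Rv)
    (π : ℕ → (Ω →₀ ℝ≥0∞)) (hprob : ∀ n, ((π n).sum fun _ w => w) = 1)
    (hbayes : Tendsto (fun n => ⨅ δ : X → A, (π n).sum fun θ w => w * R θ δ)
      atTop (nhds Rv))
    (Ωstar : Set Ω) (B : ℕ → Set Ω) (hB : ∀ n, B n ⊆ Ωstar) (gseq : ℕ → G)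
    (hnest : ∀ n, (barG (gseq n)) '' B n ⊆ (barG (gseq (n + 1))) '' B (n + 1))
    (hcover : (⋃ n, (barG (gseq n)) '' B n) = Set.univ)
    (δ₀ : X → A) (hconst : ∀ θ : Ω, R θ δ₀ = Rv) :
    (⨆ θ ∈ Ωstar, R θ δ₀) = Rv ∧ (⨅ δ : X → A, ⨆ θ ∈ Ωstar, R θ δ) = Rv := by
  classical
  -- Ω is nonempty (a probability prior exists)
  have hΩ : Nonempty Ω := by
    by_contra h
    rw [not_nonempty_iff] at h
    have hz : π 0 = 0 := Finsupp.ext fun a => isEmptyElim a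
    have h0 := hprob 0
    rw [hz, Finsupp.sum_zero_index] at h0
    exact one_ne_zero h0.symm
  set f : ℕ → Set Ω := fun n => (barG (gseq n)) '' B n with hf
  have hmono : Monotone f := monotone_nat_of_le_succ hnest
  have hall : ∀ θ : Ω, ∃ m, θ ∈ f m := fun θ =>
    Set.mem_iUnion.mp (hcover ▸ Set.mem_univ θ)
  choose idx hidx using hall
  -- Ωstar is nonempty
  obtain ⟨θ₀⟩ := hΩ
  obtain ⟨η₀, hη₀, -⟩ := hidx θ₀
  have hη₀star : η₀ ∈ Ωstar := hB _ hη₀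
  have h1 : (⨆ θ ∈ Ωstar, R θ δ₀) = Rv := by
    apply le_antisymm
    · exact iSup₂_le fun θ _ => (hconst θ).le
    · exact le_trans (hconst η₀).ge (le_iSup₂ (f := fun θ _ => R θ δ₀) η₀ hη₀star)
  refine ⟨h1, le_antisymm (h1 ▸ iInf_le _ δ₀) (le_iInf fun δ => ?_)⟩
  set S := ⨆ θ ∈ Ωstar, R θ δ with hS
  refine le_of_tendsto hbayes (Filter.Eventually.of_forall fun n => ?_)
  set M := (π n).support.sup idx with hM
  set g := gseq M with hg
  set δ' : X → A := fun x => gA g (δ (gX g⁻¹ x)) with hδ'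
  have key : ∀ θ ∈ (π n).support, R θ δ' ≤ S := by
    intro θ hθ
    have hm : θ ∈ f M := hmono (Finset.le_sup hθ) (hidx θ)
    obtain ⟨η, hηB, hηθ⟩ := hm
    have : R θ δ' = R η δ := by
      rw [← hηθ]; exact (hinv g η δ).symm
    rw [this]
    exact le_iSup₂ (f := fun θ _ => R θ δ) η (hB _ hηB)
  calc (⨅ d : X → A, (π n).sum fun θ w => w * R θ d)
      ≤ (π n).sum fun θ w => w * R θ δ' := iInf_le _ δ'
    _ ≤ (π n).sum fun θ w => w * S := by
        refine Finset.sum_le_sum fun θ hθ => ?_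
        exact mul_le_mul_right (key θ hθ) _
    _ = ((π n).sum fun _ w => w) * S := (Finsupp.sum_mul _ _).symm
    _ = S := by rw [hprob n, one_mul]
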